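/- arXiv:2007.01478 — 4 statements merged into one kernel-verified Lean document; each statement's English description precedes it below -/
import Mathlib

section
/- For any two real-valued random variables X₁ and X₂ with finite variance (defined on a common probability space), Var(max(X₁, X₂)) ≤ Var(X₁) + Var(X₂). -/
open MeasureTheory ProbabilityTheory

/-! The maximum is 1-Lipschitz for the sup norm on pairs, so centring `max X₁ X₂` at
`max 𝔼X₁ 𝔼X₂` gives `(max X₁ X₂ - max 𝔼X₁ 𝔼X₂)² ≤ (X₁ - 𝔼X₁)² + (X₂ - 𝔼X₂)²` pointwise.
Since the variance is the least mean squared deviation from a constant, integrating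
this bound gives the claim. -/

theorem sq_max_sub_max_le {α : Type*} [Ring α] [LinearOrder α] [IsOrderedRing α]
    (a b c d : α) : (max a b - max c d) ^ 2 ≤ (a - c) ^ 2 + (b - d) ^ 2 := by
  have hle : |max a b - max c d| ≤ max |a - c| |b - d| := abs_max_sub_max_le_max a b c d
  calc (max a b - max c d) ^ 2 = |max a b - max c d| ^ 2 := (sq_abs _).symm
    _ ≤ max |a - c| |b - d| ^ 2 := pow_le_pow_left₀ (abs_nonneg _) hle 2
    _ ≤ (a - c) ^ 2 + (b - d) ^ 2 := by
      rcases max_choice |a - c| |b - d| with h | h <;> rw [h, sq_abs]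
      exacts [le_add_of_nonneg_right (sq_nonneg _), le_add_of_nonneg_left (sq_nonneg _)]

theorem ProbabilityTheory.variance_le_integral_sub_sq {Ω : Type*} [MeasurableSpace Ω]
    {μ : Measure Ω} [IsProbabilityMeasure μ] {X : Ω → ℝ} (hX : AEStronglyMeasurable X μ)
    (c : ℝ) : Var[X; μ] ≤ ∫ ω, (X ω - c) ^ 2 ∂μ := by
  rw [← variance_sub_const hX c]
  exact variance_le_expectation_sq (hX.sub aestronglyMeasurable_const)

/-- **Lemma A.2**: `Var(max(X₁, X₂)) ≤ Var(X₁) + Var(X₂)`. -/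
theorem variance_max_le
    {Ω : Type*} [MeasurableSpace Ω] (μ : Measure Ω) [IsProbabilityMeasure μ]
    (X₁ X₂ : Ω → ℝ) (h₁ : MemLp X₁ 2 μ) (h₂ : MemLp X₂ 2 μ) :
    variance (fun ω => max (X₁ ω) (X₂ ω)) μ ≤ variance X₁ μ + variance X₂ μ := by
  have hmax : MemLp (fun ω => max (X₁ ω) (X₂ ω)) 2 μ := h₁.sup h₂
  have hdev₁ : Integrable (fun ω => (X₁ ω - μ[X₁]) ^ 2) μ :=
    (h₁.sub (memLp_const _)).integrable_sq
  have hdev₂ : Integrable (fun ω => (X₂ ω - μ[X₂]) ^ 2) μ :=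
    (h₂.sub (memLp_const _)).integrable_sq
  calc Var[fun ω => max (X₁ ω) (X₂ ω); μ]
      ≤ ∫ ω, (max (X₁ ω) (X₂ ω) - max μ[X₁] μ[X₂]) ^ 2 ∂μ :=
        variance_le_integral_sub_sq hmax.aestronglyMeasurable _
    _ ≤ ∫ ω, ((X₁ ω - μ[X₁]) ^ 2 + (X₂ ω - μ[X₂]) ^ 2) ∂μ :=
        integral_mono (hmax.sub (memLp_const _)).integrable_sq (hdev₁.add hdev₂)
          fun ω => sq_max_sub_max_le _ _ _ _
    _ = Var[X₁; μ] + Var[X₂; μ] := by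
        rw [integral_add hdev₁ hdev₂, variance_eq_integral h₁.aemeasurable,
          variance_eq_integral h₂.aemeasurable]
end

section
/- Let 0 < η < 1 and let e₁, e₂, e₃ be the first three canonical basis vectors of ℝ³. Define X ∈ ℝ^{3×4} with columns X₁ = (1+η²)^{−1/2}(e₁ + ηe₃), X₂ = (1+η²)^{−1/2}(e₁ − ηe₃), X₃ = 2^{−1/2}(e₁ + e₂), X₄ = e₂, and let Σ̂ := (1/3)XᵀX. With S* = {1,2} and sign(β*_{S*}) = (1,1)ᵀ, the irrepresentable quantity satisfies ‖Σ̂_{{3,4},{1,2}} (Σ̂_{{1,2},{1,2}})⁻¹ (1,1)ᵀ‖_∞ = √((1+η²)/2) < 1. Moreover, X₁ + X₂ is parallel to X₃ − 2^{−1/2}X₄, and consequently the scalar D̂({3,4}) := Σ̂_{{1,2},{1,2}} − Σ̂_{{1,2},{3,4}} Σ̂_{{3,4},{3,4}}⁻¹ Σ̂_{{3,4},{1,2}} (a 2×2 matrix) has λ_min(D̂({3,4})) = 0. -/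
/-!
Both columns of `S* = {1, 2}` have unit norm, so `(1, 1)` is an eigenvector of `Σ̂_{S*,S*}` and the
irrepresentable vector is a multiple of `Σ̂_{{3,4},S*} (1, 1)`, which is explicit. For the second
half, `X₁ + X₂ ∈ span (X₃, X₄)` puts `(1, 1)` in the kernel of the Schur complement `D̂({3,4})`,
and a Schur complement of the positive semidefinite Gram matrix `Σ̂` is positive semidefinite;
hence the Rayleigh quotient of `D̂({3,4})` has minimum `0`.
-/

open Matrix

noncomputable section

namespace Stmt9

/-- The design matrix of the corner-case example: columns
`X₁ = (1+η²)^{-1/2}(e₁ + ηe₃)`, `X₂ = (1+η²)^{-1/2}(e₁ − ηe₃)`,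
`X₃ = 2^{-1/2}(e₁ + e₂)`, `X₄ = e₂`. -/
def Xex (η : ℝ) : Matrix (Fin 3) (Fin 4) ℝ :=
  !![(Real.sqrt (1 + η ^ 2))⁻¹, (Real.sqrt (1 + η ^ 2))⁻¹, (Real.sqrt 2)⁻¹, 0;
     0, 0, (Real.sqrt 2)⁻¹, 1;
     (Real.sqrt (1 + η ^ 2))⁻¹ * η, -((Real.sqrt (1 + η ^ 2))⁻¹ * η), 0, 0]

/-- Sample covariance `Σ̂ = (1/3) Xᵀ X` of the example. -/
def Sig (η : ℝ) : Matrix (Fin 4) (Fin 4) ℝ := (3 : ℝ)⁻¹ • ((Xex η)ᵀ * Xex η)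

/-- Smallest eigenvalue of a symmetric matrix, via the Rayleigh quotient. -/
def lamMin {m : Type} [Fintype m] (A : Matrix m m ℝ) : ℝ :=
  sInf {r | ∃ x : m → ℝ, ∑ i, x i ^ 2 = 1 ∧ r = x ⬝ᵥ (A *ᵥ x)}

/-- `D̂({3,4}) = Σ̂_{{1,2},{1,2}} − Σ̂_{{1,2},{3,4}}Σ̂_{{3,4},{3,4}}⁻¹Σ̂_{{3,4},{1,2}}`. -/
def Dhat34 (η : ℝ) : Matrix (Fin 2) (Fin 2) ℝ :=
  (Sig η).submatrix ![0, 1] ![0, 1] -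
    (Sig η).submatrix ![0, 1] ![2, 3] * ((Sig η).submatrix ![2, 3] ![2, 3])⁻¹ *
      (Sig η).submatrix ![2, 3] ![0, 1]

end Stmt9

open scoped ComplexOrder

section General

variable {K : Type*} [Field K] {n a b : Type*}

theorem Matrix.inv_mulVec_eq_inv_smul [Fintype n] [DecidableEq n] {M : Matrix n n K}
    (hM : IsUnit M.det) {v : n → K} {c : K} (h : M *ᵥ v = c • v) : M⁻¹ *ᵥ v = c⁻¹ • v := by
  have hv : v = c • (M⁻¹ *ᵥ v) := by
    rw [← mulVec_smul, ← h, mulVec_mulVec, nonsing_inv_mul _ hM, one_mulVec]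
  rcases eq_or_ne c 0 with rfl | hc
  · rw [hv, zero_smul, mulVec_zero, _root_.inv_zero, zero_smul]
  · conv_rhs => rw [hv, smul_smul, inv_mul_cancel₀ hc, one_smul]

theorem Matrix.submatrix_mul_mulVec {m p : Type*} [Fintype m] [Fintype b] (A : Matrix n m K)
    (X : Matrix m p K) (r : a → n) (c : b → p) (v : b → K) :
    (A * X).submatrix r c *ᵥ v = A.submatrix r id *ᵥ (X.submatrix id c *ᵥ v) := by
  rw [submatrix_mul _ _ _ _ _ Function.bijective_id, mulVec_mulVec]

theorem Matrix.schurComplement_submatrix_mulVec_eq_zero {m p : Type*} [Fintype m] [Fintype a]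
    [Fintype b] [DecidableEq b] (A : Matrix p m K) (X : Matrix m p K) (s : a → p) (t : b → p)
    (hT : IsUnit ((A * X).submatrix t t).det) {u : a → K} {w : b → K}
    (h : X.submatrix id s *ᵥ u = X.submatrix id t *ᵥ w) :
    ((A * X).submatrix s s - (A * X).submatrix s t * ((A * X).submatrix t t)⁻¹ *
      (A * X).submatrix t s) *ᵥ u = 0 := by
  have hTS : (A * X).submatrix t s *ᵥ u = (A * X).submatrix t t *ᵥ w := by
    rw [submatrix_mul_mulVec, h, ← submatrix_mul_mulVec]
  have hw : ((A * X).submatrix t t)⁻¹ *ᵥ ((A * X).submatrix t s *ᵥ u) = w := by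
    rw [hTS, mulVec_mulVec, nonsing_inv_mul _ hT, one_mulVec]
  rw [sub_mulVec, ← mulVec_mulVec, ← mulVec_mulVec, hw, submatrix_mul_mulVec A X s t, ← h,
    ← submatrix_mul_mulVec, sub_self]

theorem Matrix.PosSemidef.schurComplement_submatrix {𝕜 : Type*} [RCLike 𝕜] [Fintype a]
    [Fintype b] [DecidableEq b] {G : Matrix n n 𝕜} (hG : G.PosSemidef) (s : a → n) (t : b → n)
    (hT : (G.submatrix t t).PosDef) :
    (G.submatrix s s - G.submatrix s t * (G.submatrix t t)⁻¹ * G.submatrix t s).PosSemidef := by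
  have hST : (G.submatrix t s)ᴴ = G.submatrix s t := by
    rw [conjTranspose_submatrix, hG.isHermitian.eq]
  have hblocks : G.submatrix (Sum.elim t s) (Sum.elim t s) =
      fromBlocks (G.submatrix t t) (G.submatrix t s) (G.submatrix t s)ᴴ (G.submatrix s s) := by
    rw [hST]; exact (fromBlocks_toBlocks _).symm
  have := hT.isUnit.invertible
  rw [← hST, ← PosDef.fromBlocks₁₁ _ _ hT, ← hblocks]
  exact hG.submatrix _

end General

namespace Stmt9

theorem lamMin_eq_zero_of_posSemidef {m : Type} [Fintype m] {A : Matrix m m ℝ}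
    (hA : A.PosSemidef) {x : m → ℝ} (hx : ∑ i, x i ^ 2 = 1) (hAx : A *ᵥ x = 0) :
    lamMin A = 0 := by
  refine IsLeast.csInf_eq ⟨⟨x, hx, by rw [hAx, dotProduct_zero]⟩, ?_⟩
  rintro r ⟨y, -, rfl⟩
  simpa using hA.dotProduct_mulVec_nonneg y

theorem Sig_eq (η : ℝ) : Sig η = (3 : ℝ)⁻¹ •
    !![1, (1 - η ^ 2) / (1 + η ^ 2), (√(1 + η ^ 2) * √2)⁻¹, 0;
       (1 - η ^ 2) / (1 + η ^ 2), 1, (√(1 + η ^ 2) * √2)⁻¹, 0;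
       (√(1 + η ^ 2) * √2)⁻¹, (√(1 + η ^ 2) * √2)⁻¹, 1, (√2)⁻¹;
       0, 0, (√2)⁻¹, 1] := by
  have h1 : (0 : ℝ) < 1 + η ^ 2 := by positivity
  have hs : √(1 + η ^ 2) ^ 2 = 1 + η ^ 2 := Real.sq_sqrt h1.le
  have ht : √2 ^ 2 = 2 := Real.sq_sqrt zero_le_two
  have : √(1 + η ^ 2) ≠ 0 := by positivity
  have : √2 ≠ 0 := by positivity
  ext i j
  fin_cases i <;> fin_cases j <;>
    simp [Sig, Xex, mul_apply, Fin.sum_univ_succ] <;> field_simp <;> simp only [hs, ht] <;> ring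

theorem Sig_posSemidef (η : ℝ) : (Sig η).PosSemidef := by
  simpa [Sig, conjTranspose_eq_transpose_of_trivial] using
    (posSemidef_conjTranspose_mul_self (Xex η)).smul (a := (3 : ℝ)⁻¹) (by norm_num)

theorem Sig_submatrix_S (η : ℝ) : (Sig η).submatrix ![0, 1] ![0, 1] =
    (3 : ℝ)⁻¹ • !![1, (1 - η ^ 2) / (1 + η ^ 2); (1 - η ^ 2) / (1 + η ^ 2), 1] := by
  rw [Sig_eq]; ext i j; fin_cases i <;> fin_cases j <;> rfl

theorem Sig_submatrix_T (η : ℝ) : (Sig η).submatrix ![2, 3] ![2, 3] =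
    (3 : ℝ)⁻¹ • !![1, (√2)⁻¹; (√2)⁻¹, 1] := by
  rw [Sig_eq]; ext i j; fin_cases i <;> fin_cases j <;> rfl

theorem Sig_submatrix_TS (η : ℝ) : (Sig η).submatrix ![2, 3] ![0, 1] =
    (3 : ℝ)⁻¹ • !![(√(1 + η ^ 2) * √2)⁻¹, (√(1 + η ^ 2) * √2)⁻¹; 0, 0] := by
  rw [Sig_eq]; ext i j; fin_cases i <;> fin_cases j <;> rfl

theorem det_Sig_submatrix_S_ne_zero {η : ℝ} (hη : η ≠ 0) :
    ((Sig η).submatrix ![0, 1] ![0, 1]).det ≠ 0 := by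
  rw [Sig_submatrix_S, det_smul, det_fin_two_of]
  have : 1 * 1 - (1 - η ^ 2) / (1 + η ^ 2) * ((1 - η ^ 2) / (1 + η ^ 2)) =
      4 * η ^ 2 / (1 + η ^ 2) ^ 2 := by
    field_simp; ring
  rw [this]
  positivity

theorem det_Sig_submatrix_T_ne_zero (η : ℝ) : ((Sig η).submatrix ![2, 3] ![2, 3]).det ≠ 0 := by
  rw [Sig_submatrix_T, det_smul, det_fin_two_of, ← mul_inv, Real.mul_self_sqrt zero_le_two]
  norm_num

theorem Sig_submatrix_S_mulVec_one (η : ℝ) : (Sig η).submatrix ![0, 1] ![0, 1] *ᵥ ![1, 1] =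
    (2 / (3 * (1 + η ^ 2))) • ![1, 1] := by
  have : (1 : ℝ) + η ^ 2 ≠ 0 := by positivity
  rw [Sig_submatrix_S]
  ext i
  fin_cases i <;> simp [mulVec, dotProduct, Fin.sum_univ_two] <;> field_simp <;> ring

theorem Sig_submatrix_TS_mulVec_one (η : ℝ) : (Sig η).submatrix ![2, 3] ![0, 1] *ᵥ ![1, 1] =
    ![2 / (3 * (√(1 + η ^ 2) * √2)), 0] := by
  rw [Sig_submatrix_TS]
  ext i
  fin_cases i
  · simp [mulVec, dotProduct, Fin.sum_univ_two]
    ring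
  · simp

theorem irrepresentable_eq {η : ℝ} (hη : η ≠ 0) :
    (Sig η).submatrix ![2, 3] ![0, 1] *ᵥ (((Sig η).submatrix ![0, 1] ![0, 1])⁻¹ *ᵥ ![1, 1]) =
      ![√((1 + η ^ 2) / 2), 0] := by
  have h1 : (0 : ℝ) < 1 + η ^ 2 := by positivity
  rw [inv_mulVec_eq_inv_smul (det_Sig_submatrix_S_ne_zero hη).isUnit
    (Sig_submatrix_S_mulVec_one η), mulVec_smul, Sig_submatrix_TS_mulVec_one, smul_cons,
    smul_cons, smul_zero, smul_empty, smul_eq_mul, Real.sqrt_div h1.le]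
  congr 1
  field_simp
  rw [Real.sq_sqrt h1.le]

theorem Xex_col_sum_parallel (η : ℝ) : (fun i => Xex η i 0 + Xex η i 1) =
    fun i => 2 * √2 / √(1 + η ^ 2) * (Xex η i 2 - (√2)⁻¹ * Xex η i 3) := by
  have : √2 ≠ 0 := by positivity
  funext i
  fin_cases i
  · simp only [Xex, Fin.zero_eta, Fin.isValue, of_apply, cons_val', cons_val_zero,
      cons_val_fin_one, cons_val_one, cons_val, mul_zero, sub_zero]
    field_simp
    ring
  all_goals simp [Xex]

theorem Dhat34_mulVec_one (η : ℝ) : Dhat34 η *ᵥ ![1, 1] = 0 := by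
  have hSig : Sig η = ((3 : ℝ)⁻¹ • (Xex η)ᵀ) * Xex η := by
    rw [Sig, Matrix.smul_mul]
  have hX : (Xex η).submatrix id ![0, 1] *ᵥ ![1, 1] = (Xex η).submatrix id ![2, 3] *ᵥ
      ![2 * √2 / √(1 + η ^ 2), -(2 * √2 / √(1 + η ^ 2) * (√2)⁻¹)] := by
    funext i
    simp only [mulVec, dotProduct, Fin.sum_univ_two, submatrix_apply, id, cons_val_zero,
      cons_val_one]
    linear_combination congrFun (Xex_col_sum_parallel η) i
  have hT := (det_Sig_submatrix_T_ne_zero η).isUnit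
  rw [hSig] at hT
  rw [Dhat34, hSig]
  exact schurComplement_submatrix_mulVec_eq_zero _ _ _ _ hT hX

theorem Dhat34_posSemidef (η : ℝ) : (Dhat34 η).PosSemidef :=
  (Sig_posSemidef η).schurComplement_submatrix _ _ <|
    ((Sig_posSemidef η).submatrix _).posDef_iff_det_ne_zero.mpr (det_Sig_submatrix_T_ne_zero η)

theorem lamMin_Dhat34 (η : ℝ) : lamMin (Dhat34 η) = 0 := by
  refine lamMin_eq_zero_of_posSemidef (Dhat34_posSemidef η) (x := (√2)⁻¹ • ![1, 1]) ?_ ?_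
  · norm_num [Fin.sum_univ_two, inv_pow]
  · rw [mulVec_smul, Dhat34_mulVec_one, smul_zero]

/-- **Remark 3** (corner case where LASSO succeeds but best subset selection fails):
the irrepresentable quantity equals `√((1+η²)/2) < 1`, while `X₁ + X₂` is parallel to
`X₃ − 2^{-1/2}X₄` and hence `λ_min(D̂({3,4})) = 0`. -/
theorem lasso_succeeds_bss_fails (η : ℝ) (hη0 : 0 < η) (hη1 : η < 1) :
    (max |(((Sig η).submatrix ![2, 3] ![0, 1]) *ᵥ
          (((Sig η).submatrix ![0, 1] ![0, 1])⁻¹ *ᵥ ![1, 1])) 0|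
        |(((Sig η).submatrix ![2, 3] ![0, 1]) *ᵥ
          (((Sig η).submatrix ![0, 1] ![0, 1])⁻¹ *ᵥ ![1, 1])) 1|
      = Real.sqrt ((1 + η ^ 2) / 2)) ∧
    Real.sqrt ((1 + η ^ 2) / 2) < 1 ∧
    (∃ c : ℝ, (fun i => Xex η i 0 + Xex η i 1) =
      fun i => c * (Xex η i 2 - (Real.sqrt 2)⁻¹ * Xex η i 3)) ∧
    lamMin (Dhat34 η) = 0 := by
  refine ⟨?_, ?_, ⟨_, Xex_col_sum_parallel η⟩, lamMin_Dhat34 η⟩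
  · rw [irrepresentable_eq hη0.ne']
    simp [abs_of_nonneg, Real.sqrt_nonneg, div_nonneg]
  · rw [Real.sqrt_lt' one_pos]
    nlinarith

end Stmt9
end
end

section
/- Let y = X_{S*} β*_{S*} + ε with ε ∈ ℝⁿ, let S ⊆ [p] be such that X_S has full column rank, and let S₀ := S* ∖ S. Then R_S − R_{S*} = n (β*_{S₀})ᵀ D̂(S) β*_{S₀} + 2 εᵀ(I − P_{X_S})X_{S₀} β*_{S₀} − εᵀ(P_{X_S} − P_{X_{S*}})ε. -/
open Matrix Finset

noncomputable section

namespace Stmt10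

variable {n p : ℕ}

def colSub (X : Matrix (Fin n) (Fin p) ℝ) (S : Finset (Fin p)) :
    Matrix (Fin n) {j // j ∈ S} ℝ :=
  Matrix.of fun i j => X i j.val

def proj (X : Matrix (Fin n) (Fin p) ℝ) (S : Finset (Fin p)) :
    Matrix (Fin n) (Fin n) ℝ :=
  colSub X S * ((colSub X S)ᵀ * colSub X S)⁻¹ * (colSub X S)ᵀ

def RSS (X : Matrix (Fin n) (Fin p) ℝ) (S : Finset (Fin p)) (y : Fin n → ℝ) : ℝ :=
  y ⬝ᵥ ((1 - proj X S) *ᵥ y)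

def sampleCov (X : Matrix (Fin n) (Fin p) ℝ) : Matrix (Fin p) (Fin p) ℝ :=
  ((n : ℝ))⁻¹ • (Xᵀ * X)

def subCov (X : Matrix (Fin n) (Fin p) ℝ) (A B : Finset (Fin p)) :
    Matrix {j // j ∈ A} {j // j ∈ B} ℝ :=
  Matrix.of fun a b => sampleCov X a.val b.val

def Dhat (X : Matrix (Fin n) (Fin p) ℝ) (Sstar S : Finset (Fin p)) :
    Matrix {j // j ∈ Sstar \ S} {j // j ∈ Sstar \ S} ℝ :=
  subCov X (Sstar \ S) (Sstar \ S) -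
    subCov X (Sstar \ S) S * (subCov X S S)⁻¹ * subCov X S (Sstar \ S)

def quadD (X : Matrix (Fin n) (Fin p) ℝ) (Sstar S : Finset (Fin p)) (β : Fin p → ℝ) : ℝ :=
  (fun a : {j // j ∈ Sstar \ S} => β a.val) ⬝ᵥ
    (Dhat X Sstar S *ᵥ fun a : {j // j ∈ Sstar \ S} => β a.val)

/-! The signal `X_{S*} β_{S*}` splits as `X_S β_S + X_{S₀} β_{S₀}`, because `β` vanishes off `S*`.
The symmetric matrix `I − P_{X_S}` kills the first summand and `I − P_{X_{S*}}` kills the whole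
signal, so expanding both residual quadratic forms leaves the noise terms of the statement plus
`(X_{S₀} β_{S₀})ᵀ (I − P_{X_S}) X_{S₀} β_{S₀}`. That last term is `n β_{S₀}ᵀ D̂(S) β_{S₀}`: the
Schur complement `D̂(S)` of the sample covariance is `n⁻¹` times the Gram matrix of the columns of
`X_{S₀}` residualised against `X_S`. -/

lemma isUnit_transpose_mul_self_of_rank_eq {R ι m : Type*} [Field R] [LinearOrder R]
    [IsStrictOrderedRing R] [Fintype ι] [Fintype m] [DecidableEq m] (A : Matrix ι m R)
    (h : A.rank = Fintype.card m) :
    IsUnit (Aᵀ * A) := by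
  rw [← Matrix.mulVec_surjective_iff_isUnit]
  change Function.Surjective (Aᵀ * A).mulVecLin
  rw [← LinearMap.range_eq_top]
  refine Submodule.eq_top_of_finrank_eq ?_
  rw [Module.finrank_pi]
  exact (Matrix.rank_transpose_mul_self A).trans h

lemma _root_.Matrix.IsSymm.dotProduct_mulVec_comm {R ι : Type*} [CommSemiring R] [Fintype ι]
    {M : Matrix ι ι R} (hM : M.IsSymm) (x y : ι → R) : x ⬝ᵥ (M *ᵥ y) = y ⬝ᵥ (M *ᵥ x) := by
  rw [Matrix.dotProduct_mulVec, ← Matrix.mulVec_transpose, hM.eq, dotProduct_comm]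

lemma _root_.Matrix.IsSymm.dotProduct_mulVec_add_of_mulVec_eq {R ι : Type*} [CommSemiring R]
    [Fintype ι] {M : Matrix ι ι R} (hM : M.IsSymm) {w v : ι → R} (hwv : M *ᵥ w = M *ᵥ v)
    (ε : ι → R) :
    (w + ε) ⬝ᵥ (M *ᵥ (w + ε)) = v ⬝ᵥ (M *ᵥ v) + 2 * (ε ⬝ᵥ (M *ᵥ v)) + ε ⬝ᵥ (M *ᵥ ε) := by
  rw [Matrix.mulVec_add, hwv, add_dotProduct, dotProduct_add, dotProduct_add,
    hM.dotProduct_mulVec_comm w, hwv, hM.dotProduct_mulVec_comm w, hwv]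
  ring

lemma dotProduct_transpose_mul_mul_mulVec {R ι m : Type*} [CommSemiring R] [Fintype ι]
    [Fintype m] (A : Matrix ι m R) (M : Matrix ι ι R) (x : m → R) :
    x ⬝ᵥ ((Aᵀ * M * A) *ᵥ x) = (A *ᵥ x) ⬝ᵥ (M *ᵥ (A *ᵥ x)) := by
  rw [← Matrix.mulVec_mulVec, ← Matrix.mulVec_mulVec, Matrix.dotProduct_mulVec x,
    Matrix.vecMul_transpose]

section Projection

variable (X : Matrix (Fin n) (Fin p) ℝ)

lemma colSub_mulVec (T : Finset (Fin p)) (β : Fin p → ℝ) :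
    colSub X T *ᵥ (fun j : {j // j ∈ T} => β j) = X *ᵥ fun j => if j ∈ T then β j else 0 := by
  ext i
  simp only [Matrix.mulVec, dotProduct, colSub, Matrix.of_apply, mul_ite, mul_zero,
    Finset.sum_ite_mem, Finset.univ_inter]
  exact Finset.sum_coe_sort T fun j => X i j * β j

lemma colSub_mulVec_add_colSub_sdiff_mulVec {Sstar : Finset (Fin p)} {β : Fin p → ℝ}
    (hβ : ∀ j ∉ Sstar, β j = 0) (S : Finset (Fin p)) :
    colSub X S *ᵥ (fun j : {j // j ∈ S} => β j)
      + colSub X (Sstar \ S) *ᵥ (fun j : {j // j ∈ Sstar \ S} => β j)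
      = colSub X Sstar *ᵥ (fun j : {j // j ∈ Sstar} => β j) := by
  rw [colSub_mulVec, colSub_mulVec, colSub_mulVec, ← Matrix.mulVec_add]
  congr 1
  ext j
  by_cases hj : j ∈ Sstar <;> by_cases hjS : j ∈ S <;> simp [hj, hjS, hβ]

lemma proj_isSymm (S : Finset (Fin p)) : (proj X S).IsSymm := by
  have hG : ((colSub X S)ᵀ * colSub X S)ᵀ = (colSub X S)ᵀ * colSub X S := by
    rw [Matrix.transpose_mul, Matrix.transpose_transpose]
  simp [Matrix.IsSymm, proj, Matrix.transpose_mul, Matrix.transpose_nonsing_inv, hG,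
    Matrix.mul_assoc]

lemma one_sub_proj_isSymm (S : Finset (Fin p)) : (1 - proj X S).IsSymm :=
  Matrix.isSymm_one.sub (proj_isSymm X S)

variable {X}

lemma isUnit_det_gram_colSub {S : Finset (Fin p)} (hS : (colSub X S).rank = S.card) :
    IsUnit ((colSub X S)ᵀ * colSub X S).det :=
  (Matrix.isUnit_iff_isUnit_det _).mp
    (isUnit_transpose_mul_self_of_rank_eq _ (by rw [hS, Fintype.card_coe]))

lemma proj_mul_colSub {S : Finset (Fin p)} (hS : (colSub X S).rank = S.card) :
    proj X S * colSub X S = colSub X S := by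
  rw [proj, Matrix.mul_assoc, Matrix.mul_assoc,
    Matrix.nonsing_inv_mul _ (isUnit_det_gram_colSub hS),
    Matrix.mul_one]

lemma one_sub_proj_mulVec_colSub_mulVec {S : Finset (Fin p)} (hS : (colSub X S).rank = S.card)
    (x : {j // j ∈ S} → ℝ) : (1 - proj X S) *ᵥ (colSub X S *ᵥ x) = 0 := by
  rw [Matrix.mulVec_mulVec, Matrix.sub_mul, Matrix.one_mul, proj_mul_colSub hS, sub_self,
    Matrix.zero_mulVec]

end Projection

lemma subCov_eq_smul (X : Matrix (Fin n) (Fin p) ℝ) (A B : Finset (Fin p)) :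
    subCov X A B = ((n : ℝ))⁻¹ • ((colSub X A)ᵀ * colSub X B) := by
  ext a b
  simp [subCov, sampleCov, colSub, Matrix.mul_apply]

lemma Dhat_eq_smul (X : Matrix (Fin n) (Fin p) ℝ) (Sstar : Finset (Fin p)) {S : Finset (Fin p)}
    (hn : (n : ℝ) ≠ 0) (hS : (colSub X S).rank = S.card) :
    Dhat X Sstar S = ((n : ℝ))⁻¹ •
      ((colSub X (Sstar \ S))ᵀ * (1 - proj X S) * colSub X (Sstar \ S)) := by
  have hinv : (((n : ℝ))⁻¹ • ((colSub X S)ᵀ * colSub X S))⁻¹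
      = (n : ℝ) • ((colSub X S)ᵀ * colSub X S)⁻¹ := by
    refine Matrix.inv_eq_right_inv ?_
    rw [Matrix.smul_mul, Matrix.mul_smul, smul_smul, inv_mul_cancel₀ hn,
      Matrix.mul_nonsing_inv _ (isUnit_det_gram_colSub hS), one_smul]
  simp only [Dhat, subCov_eq_smul, hinv, proj, Matrix.mul_sub, Matrix.sub_mul, Matrix.mul_one,
    Matrix.smul_mul, Matrix.mul_smul, smul_smul, smul_sub, Matrix.mul_assoc]
  rw [mul_inv_cancel₀ hn, mul_one]

lemma natCast_mul_quadD (X : Matrix (Fin n) (Fin p) ℝ) (Sstar : Finset (Fin p))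
    {S : Finset (Fin p)} (hS : (colSub X S).rank = S.card) (β : Fin p → ℝ) :
    n * quadD X Sstar S β
      = (colSub X (Sstar \ S) *ᵥ fun j : {j // j ∈ Sstar \ S} => β j) ⬝ᵥ
          ((1 - proj X S) *ᵥ (colSub X (Sstar \ S) *ᵥ fun j : {j // j ∈ Sstar \ S} => β j)) := by
  rcases eq_or_ne (n : ℝ) 0 with hn | hn
  · have : n = 0 := by exact_mod_cast hn
    subst this
    simp [dotProduct]
  rw [quadD, Dhat_eq_smul X Sstar hn hS, Matrix.smul_mulVec, dotProduct_smul, smul_eq_mul,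
    ← mul_assoc, mul_inv_cancel₀ hn, one_mul, dotProduct_transpose_mul_mul_mulVec]

/-- **Key decomposition** of the excess residual sum of squares:
`R_S − R_{S*} = n (β*_{S₀})ᵀ D̂(S) β*_{S₀} + 2εᵀ(I−P_{X_S})X_{S₀}β*_{S₀}
  − εᵀ(P_{X_S} − P_{X_{S*}})ε` with `S₀ = S* ∖ S`. -/
theorem rss_diff_decomposition
    (X : Matrix (Fin n) (Fin p) ℝ) (β : Fin p → ℝ) (Sstar S : Finset (Fin p))
    (ε y : Fin n → ℝ)
    (hsupp : ∀ j, β j ≠ 0 ↔ j ∈ Sstar)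
    (hrankS : (colSub X S).rank = S.card)
    (hrankStar : (colSub X Sstar).rank = Sstar.card)
    (hy : y = fun i =>
      (colSub X Sstar *ᵥ fun j : {j // j ∈ Sstar} => β j.val) i + ε i) :
    RSS X S y - RSS X Sstar y
      = n * quadD X Sstar S β
        + 2 * (ε ⬝ᵥ ((1 - proj X S) *ᵥ
            (colSub X (Sstar \ S) *ᵥ fun j : {j // j ∈ Sstar \ S} => β j.val)))
        - ε ⬝ᵥ ((proj X S - proj X Sstar) *ᵥ ε) := by
  have hβ : ∀ j ∉ Sstar, β j = 0 := fun j => not_imp_comm.mp (hsupp j).mp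
  have hsplit := (colSub_mulVec_add_colSub_sdiff_mulVec X hβ S).symm
  set μ := colSub X Sstar *ᵥ fun j : {j // j ∈ Sstar} => β j.val
  set v := colSub X (Sstar \ S) *ᵥ fun j : {j // j ∈ Sstar \ S} => β j.val
  have hy : y = μ + ε := hy
  have hμS : (1 - proj X S) *ᵥ μ = (1 - proj X S) *ᵥ v := by
    rw [hsplit, Matrix.mulVec_add, one_sub_proj_mulVec_colSub_mulVec hrankS, zero_add]
  have hμStar : (1 - proj X Sstar) *ᵥ μ = (1 - proj X Sstar) *ᵥ 0 := by
    rw [one_sub_proj_mulVec_colSub_mulVec hrankStar, Matrix.mulVec_zero]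
  rw [RSS, RSS, hy,
    (one_sub_proj_isSymm X S).dotProduct_mulVec_add_of_mulVec_eq hμS,
    (one_sub_proj_isSymm X Sstar).dotProduct_mulVec_add_of_mulVec_eq hμStar,
    natCast_mul_quadD X Sstar hrankS]
  simp only [Matrix.sub_mulVec, Matrix.mulVec_zero, dotProduct_sub, dotProduct_zero]
  ring

end Stmt10
end
end

section
/- Let Z be a real-valued random variable with finite fourth moment. Then Var(Z²) ≤ 2·E[(Z − E Z)⁴] − 2·Var(Z)² + 8·(E Z)²·Var(Z). -/
/-!
Write `Z = X + m` with `m = E Z`, so that `Z² = (X² + 2mX) + m²`. Discarding the constant,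
`Var(Z²) = Var(X² + 2mX) ≤ 2 Var(X²) + 2 Var(2mX)` by the parallelogram identity for the variance,
and `Var(X²) = E X⁴ − (E X²)² = E X⁴ − Var(Z)²`, `Var(2mX) = 4m² Var(Z)`.
-/

open MeasureTheory ProbabilityTheory ENNReal

lemma ENNReal.holderTriple_two_mul (p : ℝ≥0∞) : HolderTriple (2 * p) (2 * p) p where
  inv_add_inv_eq_inv := by
    rw [ENNReal.mul_inv (by simp) (by simp), ← add_mul, ENNReal.inv_two_add_inv_two, one_mul]

namespace ProbabilityTheory

variable {Ω : Type*} [MeasurableSpace Ω] {μ : Measure Ω} {X Y : Ω → ℝ}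

lemma _root_.MeasureTheory.MemLp.sq {p : ℝ≥0∞} (hX : MemLp X (2 * p) μ) :
    MemLp (X ^ 2) p μ := by
  have := holderTriple_two_mul p
  rw [pow_two]
  exact hX.mul hX

lemma variance_add_add_variance_sub [IsFiniteMeasure μ] (hX : MemLp X 2 μ) (hY : MemLp Y 2 μ) :
    Var[X + Y; μ] + Var[X - Y; μ] = 2 * Var[X; μ] + 2 * Var[Y; μ] := by
  rw [variance_add hX hY, variance_sub hX hY]
  ring

lemma variance_add_le [IsFiniteMeasure μ] (hX : MemLp X 2 μ) (hY : MemLp Y 2 μ) :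
    Var[X + Y; μ] ≤ 2 * Var[X; μ] + 2 * Var[Y; μ] := by
  linarith [variance_add_add_variance_sub hX hY, variance_nonneg (X - Y) μ]

lemma variance_sq [IsProbabilityMeasure μ] (hX : MemLp X 4 μ) :
    Var[X ^ 2; μ] = μ[X ^ 4] - μ[X ^ 2] ^ 2 := by
  rw [variance_eq_sub (MemLp.sq (by norm_num [hX])), ← pow_mul]

end ProbabilityTheory

/-- **Variance of a square**: for a real random variable `Z` with finite fourth moment,
`Var(Z²) ≤ 2·E[(Z − EZ)⁴] − 2·Var(Z)² + 8·(EZ)²·Var(Z)`. -/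
theorem variance_sq_le
    {Ω : Type*} [MeasurableSpace Ω] (μ : Measure Ω) [IsProbabilityMeasure μ]
    (Z : Ω → ℝ) (hZ : MemLp Z 4 μ) :
    variance (fun ω => Z ω ^ 2) μ ≤
      2 * (∫ ω, (Z ω - ∫ ω', Z ω' ∂μ) ^ 4 ∂μ) - 2 * (variance Z μ) ^ 2 +
        8 * (∫ ω, Z ω ∂μ) ^ 2 * variance Z μ := by
  set m := μ[Z]
  set X : Ω → ℝ := fun ω => Z ω - m
  have hX : MemLp X 4 μ := hZ.sub (memLp_const m)
  have hX_sq : MemLp (X ^ 2) 2 μ := MemLp.sq (by norm_num [hX])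
  have hmX : MemLp ((2 * m) • X) 2 μ := (hX.mono_exponent (by norm_num)).const_smul _
  have hZ_sq : (fun ω => Z ω ^ 2) = fun ω => (X ^ 2 + (2 * m) • X) ω + m ^ 2 := by
    ext ω
    simp only [X, Pi.add_apply, Pi.pow_apply, Pi.smul_apply, smul_eq_mul]
    ring
  have hVar_X : Var[X; μ] = Var[Z; μ] := variance_sub_const hZ.aestronglyMeasurable m
  have hmoment_X : μ[X ^ 2] = Var[Z; μ] := (variance_eq_integral hZ.aemeasurable).symm
  calc Var[fun ω => Z ω ^ 2; μ] = Var[X ^ 2 + (2 * m) • X; μ] := by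
        rw [hZ_sq, variance_add_const (hX_sq.add hmX).aestronglyMeasurable]
    _ ≤ 2 * Var[X ^ 2; μ] + 2 * Var[(2 * m) • X; μ] := variance_add_le hX_sq hmX
    _ = 2 * μ[X ^ 4] - 2 * Var[Z; μ] ^ 2 + 8 * m ^ 2 * Var[Z; μ] := by
        rw [variance_sq hX, variance_smul, hVar_X, hmoment_X]
        ring
end
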